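/- arXiv:2402.09762 — 6 statements merged into one kernel-verified Lean document; each statement's English description precedes it below -/
import Mathlib

section
/- Let G be a graph with maximum degree at most Δ, let p ≥ 0 be real, and let c ≥ Δ+1. Suppose f is a partial proper c-colouring of G such that for every vertex v that is not contained in a clique of size at least Δ+1−p/2, the number of f-coloured neighbours w of v whose colour appears on no other neighbour of v, minus the number of uncoloured neighbours of v, is at least deg(v)−p. Then G has a proper c-colouring in which every vertex v has at most p neighbours whose colour is repeated on another neighbour of v (i.e., a p-peaceful c-colouring). -/
/-!
Colour the uncoloured vertices greedily: each has at most `Δ < c` neighbours, so a free colour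
always exists, and the resulting colouring `g` extends `f`. Fix `v` with neighbourhood `N`.

If `v` lies in a clique `t`, then `t \ {v} ⊆ N` carries `|t| - 1` distinct colours. Every
repeated colour class in `N` has at least two members, so at most `2 (|N| - #colours) ≤
2 (Δ + 1 - |t|) ≤ p` neighbours are disturbed.

Otherwise, an `f`-undisturbed neighbour can only become disturbed by sharing its colour with an
uncoloured neighbour, and distinct such neighbours have distinct colours; so they inject into
the uncoloured neighbours, and `#disturbed ≤ |N| - #undisturbed + #uncoloured ≤ p`.
-/

open Finset SimpleGraph

namespace Finset

lemma ncard_coe_sep {α : Type*} (s : Finset α) (p : α → Prop) [DecidablePred p] :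
    {x ∈ (s : Set α) | p x}.ncard = #{x ∈ s | p x} := by
  rw [← Set.ncard_coe_finset, coe_filter]
  rfl

variable {α β : Type*} [DecidableEq α] [DecidableEq β]

/-- With `s` the neighbourhood of `v`, these are the `(g, v)`-disturbed and the
`(f, v)`-undisturbed neighbours of `v`. -/
def disturbed (s : Finset α) (g : α → β) : Finset α :=
  {w ∈ s | ∃ u ∈ s, u ≠ w ∧ g u = g w}

def undisturbed (s : Finset α) (f : α → Option β) : Finset α :=
  {w ∈ s | (f w).isSome ∧ ∀ u ∈ s, u ≠ w → f u ≠ f w}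

lemma coe_disturbed (s : Finset α) (g : α → β) :
    (s.disturbed g : Set α) = {w ∈ (s : Set α) | ∃ u ∈ (s : Set α), u ≠ w ∧ g u = g w} := by
  ext; simp [disturbed]

lemma coe_undisturbed (s : Finset α) (f : α → Option β) :
    (s.undisturbed f : Set α) =
      {w ∈ (s : Set α) | (f w).isSome ∧ ∀ u ∈ (s : Set α), u ≠ w → f u ≠ f w} := by
  ext; simp [undisturbed]

lemma card_disturbed_add_two_mul_card_image_le (s : Finset α) (g : α → β) :
    #(s.disturbed g) + 2 * #(s.image g) ≤ 2 * #s := by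
  set D := s.disturbed g
  have hDs : D ⊆ s := filter_subset _ _
  have hfibre : 2 * #(D.image g) ≤ #D := by
    refine mul_card_image_le_card D 2 fun b hb => ?_
    obtain ⟨w, hwD, rfl⟩ := mem_image.mp hb
    obtain ⟨hws, u, hus, huw, hgu⟩ := mem_filter.mp hwD
    have huD : u ∈ D := mem_filter.mpr ⟨hus, w, hws, huw.symm, hgu.symm⟩
    exact one_lt_card.mpr ⟨u, mem_filter.mpr ⟨huD, hgu⟩, w, mem_filter.mpr ⟨hwD, rfl⟩, huw⟩
  have himage : #(s.image g) ≤ #(D.image g) + #(s \ D) :=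
    calc #(s.image g) = #(D.image g ∪ (s \ D).image g) := by
          rw [← image_union, union_sdiff_of_subset hDs]
      _ ≤ #(D.image g) + #((s \ D).image g) := card_union_le _ _
      _ ≤ #(D.image g) + #(s \ D) := by gcongr; exact card_image_le
  have := card_sdiff_add_card_eq_card hDs
  omega

lemma card_undisturbed_inter_disturbed_le (s : Finset α) {f : α → Option β} {g : α → β}
    (hfg : ∀ w, (f w).isSome → f w = some (g w)) :
    #(s.undisturbed f ∩ s.disturbed g) ≤ #{w ∈ s | f w = none} := by
  refine card_le_card_of_forall_subsingleton (fun w u => g u = g w) (fun w hw => ?_) ?_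
  · obtain ⟨hwA, hwD⟩ := mem_inter.mp hw
    obtain ⟨-, hwf, hwuniq⟩ := mem_filter.mp hwA
    obtain ⟨-, u, hus, huw, hgu⟩ := mem_filter.mp hwD
    refine ⟨u, mem_filter.mpr ⟨hus, ?_⟩, hgu⟩
    rw [← Option.not_isSome_iff_eq_none]
    intro hu
    exact hwuniq u hus huw (by rw [hfg u hu, hfg w hwf, hgu])
  · rintro u - w₁ ⟨hw₁, hgw₁⟩ w₂ ⟨hw₂, hgw₂⟩
    obtain ⟨-, hw₁f, hw₁uniq⟩ := mem_filter.mp (mem_inter.mp hw₁).1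
    obtain ⟨hw₂s, hw₂f, -⟩ := mem_filter.mp (mem_inter.mp hw₂).1
    by_contra hne
    exact hw₁uniq w₂ hw₂s (Ne.symm hne) (by rw [hfg w₁ hw₁f, hfg w₂ hw₂f, ← hgw₁, ← hgw₂])

lemma card_disturbed_add_card_undisturbed_le (s : Finset α) {f : α → Option β} {g : α → β}
    (hfg : ∀ w, (f w).isSome → f w = some (g w)) :
    #(s.disturbed g) + #(s.undisturbed f) ≤ #s + #{w ∈ s | f w = none} := by
  set D := s.disturbed g
  set A := s.undisturbed f
  have hsplit := card_inter_add_card_sdiff A D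
  have hAD : #(A ∩ D) ≤ #{w ∈ s | f w = none} := card_undisturbed_inter_disturbed_le s hfg
  have hrest : #(A \ D) ≤ #(s \ D) := card_le_card (sdiff_subset_sdiff (filter_subset _ _) le_rfl)
  have hDs : #(s \ D) + #D = #s := card_sdiff_add_card_eq_card (filter_subset _ s)
  omega

end Finset

namespace SimpleGraph

variable {V α : Type*} {G : SimpleGraph V}

def IsPartialColoring (G : SimpleGraph V) (f : V → Option α) : Prop :=
  ∀ u v, G.Adj u v → (f u).isSome → f u ≠ f v

section Greedy

variable [Fintype V] [DecidableRel G.Adj] [Fintype α]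

lemma exists_color_avoiding_neighbors (f : V → Option α) {v : V}
    (hv : G.degree v < Fintype.card α) : ∃ a, ∀ w, G.Adj v w → f w ≠ some a := by
  classical
  obtain ⟨_, ha, hfree⟩ := exists_mem_notMem_of_card_lt_card
    (s := (G.neighborFinset v).image f) (t := univ.map .some) <| by
      calc #((G.neighborFinset v).image f) ≤ G.degree v := card_image_le
        _ < #(univ.map (.some : α ↪ Option α)) := by simpa using hv
  obtain ⟨a, -, rfl⟩ := mem_map.mp ha
  exact ⟨a, fun w hw hwa => hfree (mem_image.mpr ⟨w, (G.mem_neighborFinset v w).mpr hw, hwa⟩)⟩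

lemma IsPartialColoring.exists_extend_at {f : V → Option α} (hf : G.IsPartialColoring f) {v : V}
    (hv : G.degree v < Fintype.card α) :
    ∃ f' : V → Option α, G.IsPartialColoring f' ∧ (f' v).isSome ∧
      ∀ w, (f w).isSome → f' w = f w := by
  classical
  by_cases hfv : (f v).isSome
  · exact ⟨f, hf, hfv, fun _ _ => rfl⟩
  obtain ⟨a, ha⟩ := exists_color_avoiding_neighbors f hv
  have hupdate : ∀ w, w ≠ v → Function.update f v (some a) w = f w :=
    fun w hw => Function.update_of_ne hw _ _
  refine ⟨Function.update f v (some a), fun x y hxy hx => ?_, by simp, fun w hw => ?_⟩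
  · rcases eq_or_ne x v with rfl | hxv
    · rw [Function.update_self, hupdate y hxy.ne.symm]
      exact (ha y hxy).symm
    rcases eq_or_ne y v with rfl | hyv
    · rw [Function.update_self, hupdate x hxv]
      exact ha x hxy.symm
    rw [hupdate x hxv, hupdate y hyv]
    exact hf x y hxy (by rwa [hupdate x hxv] at hx)
  · exact hupdate w (by rintro rfl; exact hfv hw)

lemma IsPartialColoring.exists_coloring_extending {f : V → Option α} (hf : G.IsPartialColoring f)
    (hdeg : ∀ v, G.degree v < Fintype.card α) :
    ∃ C : G.Coloring α, ∀ v, (f v).isSome → f v = some (C v) := by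
  classical
  suffices ∀ s : Finset V, (∀ v ∉ s, (f v).isSome) →
      ∃ C : G.Coloring α, ∀ v, (f v).isSome → f v = some (C v) from this univ (by simp)
  intro s hall
  induction s using Finset.induction_on generalizing f with
  | empty =>
    refine ⟨Coloring.mk (fun v => (f v).get (hall v (notMem_empty v))) fun {u v} huv => ?_,
      fun v _ => (Option.some_get _).symm⟩
    intro heq
    exact hf u v huv (hall u (notMem_empty u)) (Option.get_inj.mp heq)
  | insert a s _ ih =>
    obtain ⟨f', hf', hf'a, hff'⟩ := hf.exists_extend_at (hdeg a)
    obtain ⟨C, hC⟩ := ih hf' fun v hv => by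
      rcases eq_or_ne v a with rfl | hva
      · exact hf'a
      · have hfv := hall v (by simp [hva, hv])
        rwa [hff' v hfv]
    exact ⟨C, fun v hv => by rw [← hff' v hv, hC v (by rwa [hff' v hv])]⟩

end Greedy

lemma IsClique.ncard_le_card_image_neighborFinset_add_one [Fintype V] [DecidableRel G.Adj]
    [DecidableEq α] (C : G.Coloring α) {t : Set V} (ht : G.IsClique t) {v : V} (hv : v ∈ t) :
    t.ncard ≤ #((G.neighborFinset v).image C) + 1 := by
  classical
  have hinj : Set.InjOn C t := fun x hx y hy hxy => by
    by_contra hne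
    exact C.valid (ht hx hy hne) hxy
  have hmaps : ∀ w ∈ t.toFinset.erase v, C w ∈ (G.neighborFinset v).image C := by
    intro w hw
    obtain ⟨hwv, hwt⟩ := mem_erase.mp hw
    rw [Set.mem_toFinset] at hwt
    exact mem_image_of_mem C ((G.mem_neighborFinset v w).mpr (ht hv hwt hwv.symm))
  have := card_le_card_of_injOn C hmaps (hinj.mono (by simp))
  rw [card_erase_of_mem (by simpa using hv), ← Set.ncard_eq_toFinset_card'] at this
  omega

end SimpleGraph

theorem stmt0_general (V : Type) [Fintype V] (G : SimpleGraph V)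
    (Δ c : ℕ) (p : ℝ)
    (hdeg : ∀ v, (G.neighborSet v).ncard ≤ Δ) (hc : Δ + 1 ≤ c)
    (f : V → Option (Fin c))
    (hproper : ∀ u v, G.Adj u v → (f u).isSome → f u ≠ f v)
    (h : ∀ v : V,
      (¬ ∃ t : Set V, G.IsClique t ∧ v ∈ t ∧ ((Δ : ℝ) + 1 - p / 2 ≤ t.ncard)) →
      ((G.neighborSet v).ncard : ℝ) - p ≤
        ({w ∈ G.neighborSet v | (f w).isSome ∧
            ∀ u ∈ G.neighborSet v, u ≠ w → f u ≠ f w}.ncard : ℝ) -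
        ({w ∈ G.neighborSet v | f w = none}.ncard : ℝ)) :
    ∃ g : V → Fin c, (∀ u v, G.Adj u v → g u ≠ g v) ∧
      ∀ v : V, ({w ∈ G.neighborSet v |
        ∃ u ∈ G.neighborSet v, u ≠ w ∧ g u = g w}.ncard : ℝ) ≤ p := by
  classical
  simp only [← coe_neighborFinset, Set.ncard_coe_finset, card_neighborFinset_eq_degree] at hdeg h ⊢
  obtain ⟨C, hC⟩ := IsPartialColoring.exists_coloring_extending hproper
    fun v => by rw [Fintype.card_fin]; linarith [hdeg v]
  refine ⟨C, fun u v => C.valid, fun v => ?_⟩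
  rw [← coe_disturbed, Set.ncard_coe_finset]
  by_cases hclique : ∃ t : Set V, G.IsClique t ∧ v ∈ t ∧ ((Δ : ℝ) + 1 - p / 2 ≤ t.ncard)
  · obtain ⟨t, ht, hvt, htcard⟩ := hclique
    have hcolors := ht.ncard_le_card_image_neighborFinset_add_one C hvt
    have hrepeat := (G.neighborFinset v).card_disturbed_add_two_mul_card_image_le C
    rw [card_neighborFinset_eq_degree] at hrepeat
    have hcount : #((G.neighborFinset v).disturbed C) + 2 * t.ncard ≤ 2 * Δ + 2 := by
      linarith [hdeg v]
    have : (#((G.neighborFinset v).disturbed C) : ℝ) + 2 * t.ncard ≤ 2 * Δ + 2 := by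
      exact_mod_cast hcount
    linarith
  · have hundisturbed := h v hclique
    rw [← coe_undisturbed, Set.ncard_coe_finset, ncard_coe_sep] at hundisturbed
    have hcount := (G.neighborFinset v).card_disturbed_add_card_undisturbed_le hC
    rw [card_neighborFinset_eq_degree] at hcount
    have : (#((G.neighborFinset v).disturbed C) : ℝ) + #((G.neighborFinset v).undisturbed f) ≤
        G.degree v + #{w ∈ G.neighborFinset v | f w = none} := by
      exact_mod_cast hcount
    linarith

/-- Greedy completion of a partial colouring to a peaceful colouring. -/
theorem stmt0 (V : Type) [Fintype V] [DecidableEq V] (G : SimpleGraph V)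
    (Δ c : ℕ) (p : ℝ) (hp : 0 ≤ p)
    (hdeg : ∀ v, (G.neighborSet v).ncard ≤ Δ) (hc : Δ + 1 ≤ c)
    (f : V → Option (Fin c))
    (hproper : ∀ u v, G.Adj u v → (f u).isSome → f u ≠ f v)
    (h : ∀ v : V,
      (¬ ∃ t : Set V, G.IsClique t ∧ v ∈ t ∧ ((Δ : ℝ) + 1 - p / 2 ≤ t.ncard)) →
      ((G.neighborSet v).ncard : ℝ) - p ≤
        ({w ∈ G.neighborSet v | (f w).isSome ∧
            ∀ u ∈ G.neighborSet v, u ≠ w → f u ≠ f w}.ncard : ℝ) -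
        ({w ∈ G.neighborSet v | f w = none}.ncard : ℝ)) :
    ∃ g : V → Fin c, (∀ u v, G.Adj u v → g u ≠ g v) ∧
      ∀ v : V, ({w ∈ G.neighborSet v |
        ∃ u ∈ G.neighborSet v, u ≠ w ∧ g u = g w}.ncard : ℝ) ≤ p :=
  stmt0_general V G Δ c p hdeg hc f hproper h
end

section
/- Consider a proper (Δ+1)-colouring of a graph on vertex set D with maximum degree at most Δ that minimizes the sum of the squares of the colour class sizes. If some colour class has size at least 3, then the singleton colour classes form a clique. -/
/-!
Suppose the singletons `{v}` and `{w}` are colour classes but `v` and `w` are not adjacent, and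
let `x` lie in a class of size `N ≥ 3`. Recolour `w` with the colour of `v` (still proper, since
`v` is the only vertex of that colour), and then `x` with the colour `w` had, which is now unused.
Moving one vertex from a class of size `n` to one of size `m` changes the sum of squared class
sizes by `2m - 2n + 2`, so the two moves change it by `2 + (4 - 2N) < 0`, contradicting minimality.
-/

open Function Finset

theorem Set.eq_singleton_of_ncard_eq_one {β : Type*} {s : Set β} {v : β} (hs : s.ncard = 1)
    (hv : v ∈ s) : s = {v} := by
  obtain ⟨y, rfl⟩ := Set.ncard_eq_one.1 hs
  rw [Set.mem_singleton_iff.1 hv]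

section ColourClasses

variable {V α : Type*}

noncomputable def classSizeSqSum [Fintype α] (f : V → α) : ℕ :=
  ∑ a, {u | f u = a}.ncard ^ 2

variable [DecidableEq V]

theorem setOf_update_eq_self (f : V → α) (u : V) (c : α) :
    {x | update f u c x = c} = insert u {x | f x = c} := by
  ext x
  by_cases hx : x = u <;> simp [hx]

theorem setOf_update_eq_of_ne (f : V → α) (u : V) {b c : α} (hb : b ≠ c) :
    {x | update f u c x = b} = {x | f x = b} \ {u} := by
  ext x
  by_cases hx : x = u <;> simp [hx, hb.symm]

theorem classSizeSqSum_update [Fintype α] [DecidableEq α] {f : V → α} {u : V} {c : α}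
    (hc : c ≠ f u) (hu : {x | f x = f u}.Finite) (hc' : {x | f x = c}.Finite) :
    classSizeSqSum (update f u c) + 2 * {x | f x = f u}.ncard =
      classSizeSqSum f + 2 * {x | f x = c}.ncard + 2 := by
  have hn : {x | f x = f u}.ncard = {x | update f u c x = f u}.ncard + 1 := by
    rw [setOf_update_eq_of_ne f u hc.symm,
      Set.ncard_sdiff_singleton_add_one (s := {x | f x = f u}) rfl hu]
  have hm : {x | update f u c x = c}.ncard = {x | f x = c}.ncard + 1 := by
    rw [setOf_update_eq_self, Set.ncard_insert_of_notMem (s := {x | f x = c}) hc.symm hc']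
  have hrest : ∀ b ∈ (univ.erase (f u)).erase c,
      {x | update f u c x = b}.ncard = {x | f x = b}.ncard := by
    intro b hb
    obtain ⟨hbc, hbu⟩ : b ≠ c ∧ b ≠ f u := by simpa using hb
    rw [setOf_update_eq_of_ne f u hbc,
      Set.sdiff_singleton_eq_self (s := {x | f x = b}) hbu.symm]
  have hsplit : ∀ g : V → α, classSizeSqSum g = {x | g x = f u}.ncard ^ 2 +
      {x | g x = c}.ncard ^ 2 + ∑ b ∈ (univ.erase (f u)).erase c, {x | g x = b}.ncard ^ 2 := by
    intro g
    rw [classSizeSqSum, ← add_sum_erase _ _ (mem_univ (f u)),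
      ← add_sum_erase _ _ (mem_erase.2 ⟨hc, mem_univ c⟩), add_assoc]
  rw [hsplit, hsplit f, hn, hm, sum_congr rfl fun b hb => by rw [hrest b hb]]
  ring

theorem update_ne_of_adj {G : SimpleGraph V} {f : V → α}
    (hf : ∀ a b, G.Adj a b → f a ≠ f b) {u : V} {c : α} (hc : ∀ y, G.Adj u y → f y ≠ c)
    {a b : V} (hab : G.Adj a b) :
    update f u c a ≠ update f u c b := by
  rcases eq_or_ne a u with rfl | ha
  · rw [update_self, update_of_ne hab.ne.symm]
    exact (hc b hab).symm
  rcases eq_or_ne b u with rfl | hb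
  · rw [update_self, update_of_ne ha]
    exact hc a hab.symm
  rw [update_of_ne ha, update_of_ne hb]
  exact hf a b hab

theorem exists_proper_classSizeSqSum_lt [Fintype α] [DecidableEq α] {G : SimpleGraph V}
    {f : V → α} (hf : ∀ a b, G.Adj a b → f a ≠ f b) {v w : V} (hvw : v ≠ w)
    (hnadj : ¬G.Adj v w) (hclv : {u | f u = f v} = {v}) (hclw : {u | f u = f w} = {w})
    {a : α} (ha : 3 ≤ {u | f u = a}.ncard) :
    ∃ g : V → α, (∀ a b, G.Adj a b → g a ≠ g b) ∧
      classSizeSqSum g < classSizeSqSum f := by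
  have hfvw : f v ≠ f w := fun h => hvw (hclv.subset h.symm).symm
  have hav : a ≠ f v := by rintro rfl; simp [hclv] at ha
  have haw : a ≠ f w := by rintro rfl; simp [hclw] at ha
  obtain ⟨x, hx⟩ : {u | f u = a}.Nonempty := Set.nonempty_of_ncard_ne_zero (by omega)
  set g₁ := update f w (f v)
  set g₂ := update g₁ x (f w)
  have hsum₁ : classSizeSqSum g₁ + 2 * 1 = classSizeSqSum f + 2 * 1 + 2 := by
    have := classSizeSqSum_update hfvw (hclw ▸ Set.finite_singleton w)
      (hclv ▸ Set.finite_singleton v)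
    rwa [hclw, hclv, Set.ncard_singleton, Set.ncard_singleton] at this
  have hg₁a : {u | g₁ u = a} = {u | f u = a} := by
    rw [setOf_update_eq_of_ne f w hav, Set.sdiff_singleton_eq_self (s := {u | f u = a}) haw.symm]
  have hg₁w : {u | g₁ u = f w} = ∅ := by
    rw [setOf_update_eq_of_ne f w hfvw.symm, hclw, Set.sdiff_self]
  have hg₁x : g₁ x = a := (update_of_ne (by rintro rfl; exact haw hx.symm) _ _).trans hx
  have hg₁ : ∀ u₁ u₂, G.Adj u₁ u₂ → g₁ u₁ ≠ g₁ u₂ :=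
    fun _ _ => update_ne_of_adj hf fun y hwy hy => hnadj (hclv.subset hy ▸ hwy.symm)
  have hg₂ : ∀ u₁ u₂, G.Adj u₁ u₂ → g₂ u₁ ≠ g₂ u₂ :=
    fun _ _ => update_ne_of_adj hg₁ fun y _ hy => (hg₁w.subset hy : y ∈ (∅ : Set V))
  have hsum₂ :
      classSizeSqSum g₂ + 2 * {u | f u = a}.ncard = classSizeSqSum g₁ + 2 * 0 + 2 := by
    have := classSizeSqSum_update (f := g₁) (u := x) (c := f w) (hg₁x ▸ haw.symm)
      (hg₁x ▸ hg₁a ▸ Set.finite_of_ncard_ne_zero (by omega)) (hg₁w ▸ Set.finite_empty)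
    rwa [hg₁x, hg₁a, hg₁w, Set.ncard_empty] at this
  exact ⟨g₂, hg₂, by omega⟩

end ColourClasses

theorem stmt3_general (V : Type) (D : SimpleGraph V) (Δ : ℕ)
    (f : V → Fin (Δ + 1)) (hf : ∀ u v, D.Adj u v → f u ≠ f v)
    (hmin : ∀ g : V → Fin (Δ + 1), (∀ u v, D.Adj u v → g u ≠ g v) →
      ∑ a : Fin (Δ + 1), ({u : V | f u = a}.ncard) ^ 2 ≤
        ∑ a : Fin (Δ + 1), ({u : V | g u = a}.ncard) ^ 2)
    (h3 : ∃ a : Fin (Δ + 1), 3 ≤ {u : V | f u = a}.ncard) :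
    ∀ v w : V, v ≠ w → {u : V | f u = f v}.ncard = 1 →
      {u : V | f u = f w}.ncard = 1 → D.Adj v w := by
  classical
  intro v w hvw hv hw
  by_contra hnadj
  obtain ⟨a, ha⟩ := h3
  obtain ⟨g, hg, hlt⟩ := exists_proper_classSizeSqSum_lt hf hvw hnadj
    (Set.eq_singleton_of_ncard_eq_one hv rfl) (Set.eq_singleton_of_ncard_eq_one hw rfl) ha
  exact (hmin g hg).not_gt hlt

/-- In a proper `(Δ+1)`-colouring minimizing the sum of squares of colour class
sizes, if some colour class has size at least 3, the singleton colour classes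
form a clique. -/
theorem stmt3 (V : Type) [Fintype V] (D : SimpleGraph V) (Δ : ℕ)
    (hdeg : ∀ v, (D.neighborSet v).ncard ≤ Δ)
    (f : V → Fin (Δ + 1)) (hf : ∀ u v, D.Adj u v → f u ≠ f v)
    (hmin : ∀ g : V → Fin (Δ + 1), (∀ u v, D.Adj u v → g u ≠ g v) →
      ∑ a : Fin (Δ + 1), ({u : V | f u = a}.ncard) ^ 2 ≤
        ∑ a : Fin (Δ + 1), ({u : V | g u = a}.ncard) ^ 2)
    (h3 : ∃ a : Fin (Δ + 1), 3 ≤ {u : V | f u = a}.ncard) :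
    ∀ v w : V, v ≠ w → {u : V | f u = f v}.ncard = 1 →
      {u : V | f u = f w}.ncard = 1 → D.Adj v w :=
  stmt3_general V D Δ f hf hmin h3
end

section
/- Let G be a graph with bipartition (A, B) where |A| = ⌊Δ²/log^{3/2}Δ⌋, |B| = Δ, every vertex of B has exactly Δ neighbours in A, and for every S ⊆ A with |S| ≤ Δ/log^{5/4}Δ, the number of vertices of B adjacent to exactly one vertex of S is at most (e^{−1} + 1/(3 log^{1/9}Δ))|B|. Then for sufficiently large Δ, G has no proper (Δ+1)-colouring that is ((1 − e^{−1})Δ − Δ/log^{1/9}Δ)-peaceful. -/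
/-!
Double count the pairs `(b, c)` with `b ∈ B` and `c` a colour used exactly once on `N(b)`.
Peacefulness leaves every `b` at least `e⁻¹Δ + Δ/log^{1/9}Δ` such colours. Conversely, a colour
class with at most `Δ/log^{5/4}Δ` vertices in `A` is counted by at most
`(e⁻¹ + 1/(3 log^{1/9}Δ))Δ` vertices of `B`, while, as `|A| ≤ Δ²/log^{3/2}Δ`, at most
`Δ/log^{1/4}Δ` classes are larger, and each of those is counted at most `Δ` times. Summing over
the `Δ + 1` colours, the upper bound falls below the lower one for large `Δ`, since
`log^{1/4}Δ ≫ log^{1/9}Δ`.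
-/

open Finset Filter Real

section UniqueColours

variable {V κ : Type*} [DecidableEq κ] (f : V → κ) (N : Finset V)

def uniqueColours [Fintype κ] : Finset κ := {c | #{w ∈ N | f w = c} = 1}

variable {f N}

lemma not_exists_ne_colour_iff_filter_eq_singleton {w : V} (hw : w ∈ N) :
    (¬∃ u ∈ N, u ≠ w ∧ f u = f w) ↔ {u ∈ N | f u = f w} = {w} := by
  constructor
  · intro h
    ext u
    simp only [mem_filter, mem_singleton]
    refine ⟨fun ⟨hu, hfu⟩ => ?_, fun hu => by subst hu; exact ⟨hw, rfl⟩⟩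
    by_contra hne
    exact h ⟨u, hu, hne, hfu⟩
  · rintro h ⟨u, hu, hne, hfu⟩
    have : u ∈ {u ∈ N | f u = f w} := mem_filter.2 ⟨hu, hfu⟩
    exact hne (mem_singleton.1 (h ▸ this))

variable (f N) [DecidableEq V]

lemma card_uniqueColours [Fintype κ] :
    #(uniqueColours f N) = #{w ∈ N | ¬∃ u ∈ N, u ≠ w ∧ f u = f w} := by
  symm
  refine card_bij (fun w _ => f w) ?_ ?_ ?_
  · intro w hw
    rw [mem_filter] at hw
    simp only [uniqueColours, mem_filter, mem_univ, true_and,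
      (not_exists_ne_colour_iff_filter_eq_singleton hw.1).1 hw.2, card_singleton]
  · intro w hw w' hw' hww'
    rw [mem_filter] at hw hw'
    have h := (not_exists_ne_colour_iff_filter_eq_singleton hw.1).1 hw.2
    rwa [hww', (not_exists_ne_colour_iff_filter_eq_singleton hw'.1).1 hw'.2, singleton_inj,
      eq_comm] at h
  · intro c hc
    simp only [uniqueColours, mem_filter, mem_univ, true_and] at hc
    obtain ⟨w, hw⟩ := card_eq_one.1 hc
    obtain ⟨hwN, rfl⟩ := mem_filter.1 (hw ▸ mem_singleton_self w)
    exact ⟨w, mem_filter.2 ⟨hwN, (not_exists_ne_colour_iff_filter_eq_singleton hwN).2 hw⟩, rfl⟩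

end UniqueColours

lemma card_filter_lt_card_fiber_le {V κ : Type*} [Fintype κ] [DecidableEq κ] (f : V → κ)
    (A : Finset V) {s : ℝ} (hs : 0 < s) :
    (#{c | s < #{a ∈ A | f a = c}} : ℝ) ≤ #A / s := by
  rw [le_div_iff₀ hs]
  calc (#{c | s < #{a ∈ A | f a = c}} : ℝ) * s
      ≤ ∑ c ∈ {c | s < #{a ∈ A | f a = c}}, (#{a ∈ A | f a = c} : ℝ) := by
        rw [← nsmul_eq_mul]
        exact card_nsmul_le_sum _ _ _ fun c hc => (mem_filter.1 hc).2.le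
    _ ≤ ∑ c, (#{a ∈ A | f a = c} : ℝ) :=
        sum_le_sum_of_subset_of_nonneg (subset_univ _) fun _ _ _ => by positivity
    _ = #A := by
        rw [card_eq_sum_card_fiberwise fun a _ => mem_univ (f a)]
        push_cast
        rfl

lemma sum_card_uniqueColours_le {V κ : Type*} [DecidableEq V] [Fintype κ] [DecidableEq κ]
    (f : V → κ) (A B : Finset V) (N : V → Finset V) (hNA : ∀ b ∈ B, N b ⊆ A) {s β : ℝ}
    (hs : 0 < s) (hsmall : ∀ S ⊆ A, (#S : ℝ) ≤ s → (#{b ∈ B | #(N b ∩ S) = 1} : ℝ) ≤ β) :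
    (∑ b ∈ B, #(uniqueColours f (N b)) : ℝ) ≤ Fintype.card κ * β + #A / s * #B := by
  set colourClass : κ → Finset V := fun c => {a ∈ A | f a = c}
  have hβ : 0 ≤ β := by simpa using hsmall ∅ (empty_subset _) (by simpa using hs.le)
  have hcount (c : κ) : (#{b ∈ B | #{w ∈ N b | f w = c} = 1} : ℝ) ≤
      if #(colourClass c) ≤ s then β else #B := by
    have hclass : {b ∈ B | #{w ∈ N b | f w = c} = 1} = {b ∈ B | #(N b ∩ colourClass c) = 1} := by
      refine filter_congr fun b hb => ?_
      rw [← filter_mem_eq_inter]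
      simp only [colourClass, mem_filter]
      congr! 3 with w hw
      exact (and_iff_right (hNA b hb hw)).symm
    split_ifs with hc
    · exact hclass ▸ hsmall _ (filter_subset _ _) hc
    · exact_mod_cast card_filter_le _ _
  calc (∑ b ∈ B, #(uniqueColours f (N b)) : ℝ)
      = ∑ c, (#{b ∈ B | #{w ∈ N b | f w = c} = 1} : ℝ) := by
        exact_mod_cast sum_card_bipartiteAbove_eq_sum_card_bipartiteBelow
          (r := fun b c => #{w ∈ N b | f w = c} = 1)
    _ ≤ ∑ c, if #(colourClass c) ≤ s then β else (#B : ℝ) := sum_le_sum fun c _ => hcount c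
    _ = #{c | #(colourClass c) ≤ s} * β + #{c | ¬#(colourClass c) ≤ s} * #B := by
        rw [sum_ite, sum_const, sum_const, nsmul_eq_mul, nsmul_eq_mul]
    _ ≤ Fintype.card κ * β + #A / s * #B := by
        gcongr
        · exact_mod_cast card_le_univ _
        · simpa only [not_le] using card_filter_lt_card_fiber_le f A hs

lemma card_mul_sub_le_sum_card_uniqueColours {V κ : Type*} [DecidableEq V] [Fintype κ]
    [DecidableEq κ] (f : V → κ) (B : Finset V) (N : V → Finset V) {d : ℕ} {p : ℝ}
    (hN : ∀ b ∈ B, #(N b) = d)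
    (hp : ∀ b ∈ B, (#{w ∈ N b | ∃ u ∈ N b, u ≠ w ∧ f u = f w} : ℝ) ≤ p) :
    #B * (d - p) ≤ ∑ b ∈ B, (#(uniqueColours f (N b)) : ℝ) := by
  rw [← nsmul_eq_mul]
  refine card_nsmul_le_sum _ _ _ fun b hb => ?_
  have hsplit : (#{w ∈ N b | ∃ u ∈ N b, u ≠ w ∧ f u = f w} : ℝ) + #(uniqueColours f (N b)) = d := by
    rw [card_uniqueColours, ← hN b hb]
    exact_mod_cast card_filter_add_card_filter_not _
  linarith [hp b hb]

lemma eventually_log_rpow_bounds :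
    ∀ᶠ x : ℝ in atTop, 0 < log x ∧ 6 * log x ^ (1 / 9 : ℝ) ≤ log x ^ (1 / 4 : ℝ) ∧
      6 * log x ^ (1 / 9 : ℝ) ≤ x := by
  have hsmall := (isLittleO_log_rpow_rpow_atTop (1 / 9) one_pos).bound
    (by norm_num : (0 : ℝ) < 1 / 6)
  have hlarge := (tendsto_rpow_atTop (by norm_num : (0 : ℝ) < 5 / 36)).comp tendsto_log_atTop
  filter_upwards [tendsto_log_atTop.eventually_gt_atTop 0, hlarge.eventually_ge_atTop 6, hsmall,
    eventually_ge_atTop 0] with x hlog h6 hbound hx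
  refine ⟨hlog, ?_, ?_⟩
  · have : log x ^ (1 / 4 : ℝ) = log x ^ (1 / 9 : ℝ) * log x ^ (5 / 36 : ℝ) := by
      rw [← rpow_add hlog]; norm_num
    rw [this, mul_comm 6]
    exact mul_le_mul_of_nonneg_left h6 (by positivity)
  · rw [norm_of_nonneg (by positivity), rpow_one, norm_of_nonneg hx] at hbound
    linarith

lemma add_one_mul_add_div_mul_lt {x L l D : ℝ} (hx : x < 1) (hL : 0 < L) (hD : 1 ≤ D)
    (hLD : 6 * L ≤ D) (hLl : 6 * L ≤ l) :
    (D + 1) * ((x + 1 / (3 * L)) * D) + D / l * D < D * (x * D + D / L) := by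
  have hone : 1 ≤ D / (6 * L) := by rw [le_div_iff₀ (by positivity)]; linarith
  have hl : D / l ≤ D / (6 * L) := div_le_div_of_nonneg_left (by linarith) (by positivity) hLl
  have hsucc : (D + 1) / (3 * L) ≤ 2 * D / (3 * L) := by gcongr; linarith
  have hsum : x + (D + 1) / (3 * L) + D / l < D / L := by
    have : D / (6 * L) + 2 * D / (3 * L) + D / (6 * L) = D / L := by field_simp; ring
    linarith
  calc (D + 1) * ((x + 1 / (3 * L)) * D) + D / l * D
      = D * (x * D + (x + (D + 1) / (3 * L) + D / l)) := by ring
    _ < D * (x * D + D / L) := by gcongr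

lemma natFloor_sq_div_rpow_div_le {x t : ℝ} (hx : 0 < x) (ht : 0 < t) :
    (⌊x ^ 2 / t ^ (3 / 2 : ℝ)⌋₊ : ℝ) / (x / t ^ (5 / 4 : ℝ)) ≤ x / t ^ (1 / 4 : ℝ) := by
  have hsplit : t ^ (3 / 2 : ℝ) = t ^ (5 / 4 : ℝ) * t ^ (1 / 4 : ℝ) := by
    rw [← rpow_add ht]; norm_num
  calc (⌊x ^ 2 / t ^ (3 / 2 : ℝ)⌋₊ : ℝ) / (x / t ^ (5 / 4 : ℝ))
      ≤ x ^ 2 / t ^ (3 / 2 : ℝ) / (x / t ^ (5 / 4 : ℝ)) := by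
        gcongr
        exact Nat.floor_le (by positivity)
    _ = x / t ^ (1 / 4 : ℝ) := by
        rw [hsplit]; field_simp

/-- The bipartite graphs of Lemma `lem_upperbound_bipartite` have no
`((1−e⁻¹)Δ − Δ/log^{1/9}Δ)`-peaceful proper `(Δ+1)`-colouring. -/
theorem stmt11 :
    ∃ Δ₀ : ℕ, ∀ Δ : ℕ, Δ₀ ≤ Δ →
    ∀ (V : Type) [Fintype V] [DecidableEq V] (G : SimpleGraph V) (A B : Finset V),
      (∀ v, v ∈ A ∨ v ∈ B) → Disjoint A B →
      (∀ u v, G.Adj u v → (u ∈ A ∧ v ∈ B) ∨ (u ∈ B ∧ v ∈ A)) →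
      A.card = ⌊(Δ : ℝ) ^ 2 / (Real.log Δ) ^ ((3 : ℝ) / 2)⌋₊ →
      B.card = Δ →
      (∀ b ∈ B, (G.neighborSet b).ncard = Δ ∧ G.neighborSet b ⊆ ↑A) →
      (∀ S : Finset V, S ⊆ A → (S.card : ℝ) ≤ (Δ : ℝ) / (Real.log Δ) ^ ((5 : ℝ) / 4) →
        ({b ∈ (B : Set V) | {w ∈ G.neighborSet b | w ∈ S}.ncard = 1}.ncard : ℝ) ≤
          ((Real.exp 1)⁻¹ + 1 / (3 * (Real.log Δ) ^ ((1 : ℝ) / 9))) * B.card) →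
      ¬ ∃ f : V → Fin (Δ + 1),
          (∀ u v, G.Adj u v → f u ≠ f v) ∧
          ∀ v : V, ({w ∈ G.neighborSet v |
              ∃ u ∈ G.neighborSet v, u ≠ w ∧ f u = f w}.ncard : ℝ) ≤
            (1 - (Real.exp 1)⁻¹) * Δ - (Δ : ℝ) / (Real.log Δ) ^ ((1 : ℝ) / 9) := by
  obtain ⟨Δ₀, hΔ₀⟩ := eventually_atTop.1
    (tendsto_natCast_atTop_atTop.eventually eventually_log_rpow_bounds)
  refine ⟨Δ₀, fun Δ hΔ V _ _ G A B _ _ _ hA hB hdeg hS => ?_⟩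
  rintro ⟨f, -, hpeace⟩
  classical
  obtain ⟨hlog, hLl, hLΔ⟩ := hΔ₀ Δ hΔ
  have hΔ1 : (1 : ℝ) ≤ Δ := ((log_pos_iff (Nat.cast_nonneg Δ)).1 hlog).le
  set N : V → Finset V := fun v => G.neighborFinset v
  have hN (v : V) : G.neighborSet v = N v := (G.coe_neighborFinset v).symm
  simp only [hN, mem_coe, ← coe_filter, Set.ncard_coe_finset, coe_subset, filter_mem_eq_inter]
    at hdeg hS hpeace
  have hlower := card_mul_sub_le_sum_card_uniqueColours f B N (fun b hb => (hdeg b hb).1)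
    fun b _ => hpeace b
  have hupper := sum_card_uniqueColours_le f A B N (fun b hb => (hdeg b hb).2)
    (by positivity) hS
  rw [Fintype.card_fin, hB] at hupper
  rw [hB] at hlower
  have hbig := mul_le_mul_of_nonneg_right
    (hA ▸ natFloor_sq_div_rpow_div_le (by linarith) hlog) (by linarith : (0 : ℝ) ≤ Δ)
  have hgap := add_one_mul_add_div_mul_lt (inv_lt_one_of_one_lt₀ (one_lt_exp_iff.2 one_pos))
    (by positivity) hΔ1 hLΔ hLl
  push_cast at hupper
  linarith
end

section
/- Under the hypotheses of the double-counting argument: suppose G is bipartite with parts A, B, |A| = ⌊Δ²/log^{3/2}Δ⌋, |B| = Δ, each b∈B has degree Δ into A, and every subset S ⊆ A of size at most Δ/log^{5/4}Δ has at most (e^{−1} + 1/(3 log^{1/9}Δ))|B| vertices of B seeing exactly one vertex of S. Then for any (Δ+1)-colouring φ of G, letting c_b be the number of colour classes meeting N(b) in exactly one vertex, one has ∑_{b∈B} c_b ≤ |B|·Δ/log^{1/4}Δ + (Δ+1)(e^{−1} + 1/(3 log^{1/9}Δ))|B|. -/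
open Finset

/-- The double-counting bound on `∑_{b∈B} c_b` in the proof of Theorem
`upperbound`. -/
theorem stmt12 :
    ∃ Δ₀ : ℕ, ∀ Δ : ℕ, Δ₀ ≤ Δ →
    ∀ (V : Type) [Fintype V] [DecidableEq V] (G : SimpleGraph V) (A B : Finset V),
      A.card = ⌊(Δ : ℝ) ^ 2 / (Real.log Δ) ^ ((3 : ℝ) / 2)⌋₊ →
      B.card = Δ →
      (∀ b ∈ B, (G.neighborSet b).ncard = Δ ∧ G.neighborSet b ⊆ ↑A) →
      (∀ S : Finset V, S ⊆ A → (S.card : ℝ) ≤ (Δ : ℝ) / (Real.log Δ) ^ ((5 : ℝ) / 4) →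
        ({b ∈ (B : Set V) | {w ∈ G.neighborSet b | w ∈ S}.ncard = 1}.ncard : ℝ) ≤
          ((Real.exp 1)⁻¹ + 1 / (3 * (Real.log Δ) ^ ((1 : ℝ) / 9))) * B.card) →
      ∀ φ : V → Fin (Δ + 1),
        ((∑ b ∈ B, {a : Fin (Δ + 1) |
            {w ∈ G.neighborSet b | φ w = a}.ncard = 1}.ncard : ℕ) : ℝ) ≤
          (B.card : ℝ) * Δ / (Real.log Δ) ^ ((1 : ℝ) / 4) +
          ((Δ : ℝ) + 1) * ((Real.exp 1)⁻¹ + 1 / (3 * (Real.log Δ) ^ ((1 : ℝ) / 9))) * B.card := by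
  classical
  use 2
  intro Δ hΔ V _ _ G A B hA hB hdeg hsmall φ
  have hΔ2 : (2:ℝ) ≤ Δ := by exact_mod_cast hΔ
  have hΔ0 : (0:ℝ) < Δ := by linarith
  have hlog : 0 < Real.log Δ :=
    lt_of_lt_of_le (Real.log_pos (by norm_num)) (Real.log_le_log (by norm_num) hΔ2)
  set L : ℝ := (Δ:ℝ) / (Real.log Δ) ^ ((5:ℝ)/4) with hLdef
  set K : ℝ := (Real.exp 1)⁻¹ + 1 / (3 * (Real.log Δ) ^ ((1:ℝ)/9)) with hKdef
  have hK0 : 0 ≤ K := by positivity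
  have hLpos : 0 < L := div_pos hΔ0 (Real.rpow_pos_of_pos hlog _)
  set Sa : Fin (Δ+1) → Finset V := fun a => A.filter (fun v => φ v = a) with hSa
  set P : V → Fin (Δ+1) → Prop :=
    fun b a => {w ∈ G.neighborSet b | φ w = a}.ncard = 1 with hP
  -- convert per-b ncard to a Finset card
  have key1 : ∀ b : V, {a : Fin (Δ+1) | P b a}.ncard = (univ.filter (P b)).card := by
    intro b
    rw [← Set.ncard_coe_finset]
    congr 1
    ext a
    simp
  -- swap the sums
  have key2 : (∑ b ∈ B, {a : Fin (Δ+1) | P b a}.ncard)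
      = ∑ a : Fin (Δ+1), (B.filter (fun b => P b a)).card := by
    simp only [key1, Finset.card_filter]
    exact Finset.sum_comm
  -- small classes
  have hsmall' : ∀ a : Fin (Δ+1), ((Sa a).card : ℝ) ≤ L →
      ((B.filter (fun b => P b a)).card : ℝ) ≤ K * B.card := by
    intro a ha
    have h := hsmall (Sa a) (Finset.filter_subset _ _) ha
    have hEq : {b ∈ (B : Set V) | {w ∈ G.neighborSet b | w ∈ Sa a}.ncard = 1}
        = ↑(B.filter (fun b => P b a)) := by
      ext b
      simp only [Set.mem_setOf_eq, Finset.coe_filter, Finset.mem_coe]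
      rw [hP]
      refine and_congr_right fun hb => ?_
      have hst : {w ∈ G.neighborSet b | w ∈ Sa a} = {w ∈ G.neighborSet b | φ w = a} := by
        ext w
        simp only [Set.mem_setOf_eq, hSa, Finset.mem_filter]
        exact ⟨fun ⟨hw, _, h2⟩ => ⟨hw, h2⟩,
          fun ⟨hw, h2⟩ => ⟨hw, (hdeg b hb).2 hw, h2⟩⟩
      rw [hst]
    rwa [hEq, Set.ncard_coe_finset] at h
  -- number of big classes
  set Big : Finset (Fin (Δ+1)) := univ.filter (fun a => ¬ ((Sa a).card : ℝ) ≤ L) with hBig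
  have hsumSa : ∑ a : Fin (Δ+1), (Sa a).card = A.card :=
    (Finset.card_eq_sum_card_fiberwise (fun v _ => Finset.mem_univ (φ v))).symm
  have hAcard : (A.card : ℝ) ≤ (Δ:ℝ)^2 / (Real.log Δ) ^ ((3:ℝ)/2) := by
    rw [hA]
    exact Nat.floor_le (by positivity)
  have hBigL : (Big.card : ℝ) * L ≤ (A.card : ℝ) := by
    have h1 : (Big.card) • L ≤ ∑ a ∈ Big, ((Sa a).card : ℝ) := by
      apply Finset.card_nsmul_le_sum
      intro a ha
      rw [hBig, Finset.mem_filter] at ha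
      exact le_of_lt (lt_of_not_ge ha.2)
    have h2 : ∑ a ∈ Big, ((Sa a).card : ℝ) ≤ ∑ a : Fin (Δ+1), ((Sa a).card : ℝ) :=
      Finset.sum_le_sum_of_subset_of_nonneg (Finset.subset_univ _)
        (fun a _ _ => by positivity)
    rw [nsmul_eq_mul] at h1
    have h3 : ∑ a : Fin (Δ+1), ((Sa a).card : ℝ) = (A.card : ℝ) := by
      rw [← hsumSa]; push_cast; ring
    linarith
  have hBigcard : (Big.card : ℝ) ≤ (Δ:ℝ) / (Real.log Δ) ^ ((1:ℝ)/4) := by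
    have hmul : ((Δ:ℝ) / (Real.log Δ) ^ ((1:ℝ)/4)) * L = (Δ:ℝ)^2 / (Real.log Δ) ^ ((3:ℝ)/2) := by
      rw [hLdef, div_mul_div_comm, ← Real.rpow_add hlog]
      norm_num
      ring
    have := hBigL.trans (hAcard.trans_eq hmul.symm)
    exact le_of_mul_le_mul_right this hLpos
  -- assemble
  rw [key2]
  push_cast
  rw [← Finset.sum_filter_add_sum_filter_not univ (fun a => ¬ ((Sa a).card : ℝ) ≤ L)
      (fun a => ((B.filter (fun b => P b a)).card : ℝ))]
  have hbig_bound : ∑ a ∈ Big, ((B.filter (fun b => P b a)).card : ℝ)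
      ≤ (Big.card : ℝ) * B.card := by
    rw [← nsmul_eq_mul]
    apply Finset.sum_le_card_nsmul
    intro a _
    exact_mod_cast Finset.card_filter_le _ _
  have hsmall_bound : ∑ a ∈ univ.filter (fun a => ¬¬ ((Sa a).card : ℝ) ≤ L),
      ((B.filter (fun b => P b a)).card : ℝ) ≤ ((Δ:ℝ)+1) * (K * B.card) := by
    calc ∑ a ∈ univ.filter (fun a => ¬¬ ((Sa a).card : ℝ) ≤ L),
        ((B.filter (fun b => P b a)).card : ℝ)
        ≤ ∑ a ∈ univ.filter (fun a => ¬¬ ((Sa a).card : ℝ) ≤ L), K * B.card := by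
          apply Finset.sum_le_sum
          intro a ha
          rw [Finset.mem_filter, not_not] at ha
          exact hsmall' a ha.2
      _ = ((univ.filter (fun a => ¬¬ ((Sa a).card : ℝ) ≤ L)).card : ℝ) * (K * B.card) := by
          rw [Finset.sum_const, nsmul_eq_mul]
      _ ≤ ((Δ:ℝ)+1) * (K * B.card) := by
          apply mul_le_mul_of_nonneg_right _ (by positivity)
          have : (univ.filter (fun a => ¬¬ ((Sa a).card : ℝ) ≤ L)).card ≤ Δ + 1 := by
            calc _ ≤ (univ : Finset (Fin (Δ+1))).card := Finset.card_filter_le _ _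
            _ = Δ + 1 := by simp
          exact_mod_cast this
  have hBnn : (0:ℝ) ≤ B.card := by positivity
  have : (Big.card : ℝ) * B.card ≤ (B.card : ℝ) * Δ / (Real.log Δ) ^ ((1:ℝ)/4) := by
    have hrw : (B.card : ℝ) * Δ / (Real.log Δ) ^ ((1:ℝ)/4)
        = ((Δ:ℝ) / (Real.log Δ) ^ ((1:ℝ)/4)) * B.card := by ring
    rw [hrw]
    exact mul_le_mul_of_nonneg_right hBigcard hBnn
  calc _ ≤ (Big.card : ℝ) * B.card + ((Δ:ℝ)+1) * (K * B.card) :=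
        add_le_add hbig_bound hsmall_bound
    _ ≤ (B.card : ℝ) * Δ / (Real.log Δ) ^ ((1:ℝ)/4) + ((Δ:ℝ)+1) * K * B.card := by
        rw [mul_assoc]; exact add_le_add this le_rfl
end

section
/- For every graph G of maximum degree at most Δ, there exists a Δ-regular graph H containing G as an induced subgraph such that any two vertices of H lying in different copies of G (in the doubling construction) have at most 2 common neighbours, and such that if H admits a p-peaceful proper c-colouring then so does G. -/
/-!
Doubling `G` in `Δ` rounds makes it `Δ`-regular: a vertex of degree `d ≤ Δ` gains one edge to
its twin in each of the first `Δ - d` rounds. Label the `2 ^ Δ` copies of `G` by the set of rounds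
in which the second copy was taken, so that twin edges join copies whose labels differ in exactly
one round. A common neighbour of vertices in copies `s ≠ t` lies in a copy whose label is at
distance at most one from both `s` and `t`; either `s` and `t` differ in one round and the common
neighbours are the two twins in `s` and `t`, or they differ in two rounds `i, k` and the common
neighbours are the twins in `s ∆ {i}` and `s ∆ {k}`. Copy `∅` is an induced copy of `G`, so a
peaceful colouring of the doubled graph restricts to one of `G`.
-/

open scoped symmDiff

namespace Finset

variable {α : Type*} [DecidableEq α]

theorem singleton_symmDiff_singleton_ne_singleton (i k j : α) :
    ({i} ∆ {k} : Finset α) ≠ {j} := by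
  intro h
  simp only [Finset.ext_iff, mem_symmDiff, mem_singleton] at h
  have := h i; have := h k; have := h j
  grind

theorem eq_or_eq_of_singleton_symmDiff_singleton_eq {i k i' k' : α} (hik : i ≠ k)
    (h : ({i} ∆ {k} : Finset α) = {i'} ∆ {k'}) : i = i' ∨ i = k' := by
  have := Finset.ext_iff.mp h i
  simp only [mem_symmDiff, mem_singleton] at this
  tauto

end Finset

namespace SimpleGraph

variable {V : Type*} (G : SimpleGraph V) (Δ : ℕ)

/-- The copy `s` of `G` consists of the vertices `(a, s)`, where `s` is the set of rounds of
doubling in which the second copy was taken; in round `i` the vertex `a` is joined to its twin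
while its degree is still below `Δ`, that is, when `i < Δ - deg a`. -/
def doubling : SimpleGraph (V × Finset (Fin Δ)) where
  Adj x y := x.2 = y.2 ∧ G.Adj x.1 y.1 ∨
    x.1 = y.1 ∧ ∃ i : Fin Δ, (i : ℕ) < Δ - (G.neighborSet x.1).ncard ∧ x.2 ∆ y.2 = {i}
  symm := ⟨fun x y => by
    rintro (⟨h, hG⟩ | ⟨h, i, hi, hs⟩)
    · exact .inl ⟨h.symm, hG.symm⟩
    · exact .inr ⟨h.symm, i, h ▸ hi, symmDiff_comm x.2 y.2 ▸ hs⟩⟩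
  loopless := ⟨fun x => by
    rintro (⟨-, hG⟩ | ⟨-, i, -, hs⟩)
    · exact hG.ne rfl
    · simp at hs⟩

def copyIndex {n : ℕ} (s : Finset (Fin n)) : ℕ :=
  ∑ i ∈ s, 2 ^ (i : ℕ)

variable {G Δ}

theorem copyIndex_injective : Function.Injective (copyIndex (n := Δ)) := by
  intro s t h
  apply Finset.map_injective Fin.valEmbedding
  apply Finset.geomSum_injective le_rfl
  simpa [copyIndex] using h

theorem doubling_adj_mk_same {a b : V} {s : Finset (Fin Δ)} :
    (G.doubling Δ).Adj (a, s) (b, s) ↔ G.Adj a b := by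
  simp [doubling]

theorem eq_or_symmDiff_eq_singleton_of_doubling_adj {a c : V} {s r : Finset (Fin Δ)}
    (h : (G.doubling Δ).Adj (a, s) (c, r)) : r = s ∨ c = a ∧ ∃ i, s ∆ r = {i} := by
  rcases h with ⟨h, -⟩ | ⟨h, i, -, hi⟩
  · exact .inl h.symm
  · exact .inr ⟨h.symm, i, hi⟩

variable (G) in
def doublingCopy (s : Finset (Fin Δ)) : G ↪g G.doubling Δ where
  toFun a := (a, s)
  inj' _ _ h := congrArg Prod.fst h
  map_rel_iff' := doubling_adj_mk_same

theorem preimage_copyIndex (s : Finset (Fin Δ)) :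
    (fun x : V × Finset (Fin Δ) => copyIndex x.2) ⁻¹' {copyIndex s} =
      Set.range (G.doublingCopy s) := by
  ext ⟨a, t⟩
  simp only [Set.mem_preimage, Set.mem_singleton_iff, copyIndex_injective.eq_iff, Set.mem_range]
  exact ⟨fun h => ⟨a, by rw [h]; rfl⟩, fun ⟨_, hb⟩ => (congrArg Prod.snd hb).symm⟩

theorem neighborSet_doubling (a : V) (s : Finset (Fin Δ)) :
    (G.doubling Δ).neighborSet (a, s) =
      (·, s) '' G.neighborSet a ∪
        (fun i => (a, s ∆ {i})) '' {i : Fin Δ | (i : ℕ) < Δ - (G.neighborSet a).ncard} := by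
  ext ⟨c, r⟩
  simp only [mem_neighborSet, doubling, Set.mem_union, Set.mem_image, Set.mem_ofPred_eq,
    Prod.mk.injEq]
  constructor
  · rintro (⟨rfl, hG⟩ | ⟨rfl, i, hi, hs⟩)
    · exact .inl ⟨c, hG, rfl, rfl⟩
    · exact .inr ⟨i, hi, rfl, by rw [← hs, symmDiff_symmDiff_cancel_left]⟩
  · rintro (⟨c, hG, rfl, rfl⟩ | ⟨i, hi, rfl, rfl⟩)
    · exact .inl ⟨rfl, hG⟩
    · exact .inr ⟨rfl, i, hi, symmDiff_symmDiff_cancel_left _ _⟩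

theorem ncard_neighborSet_doubling [Finite V] {a : V} (ha : (G.neighborSet a).ncard ≤ Δ)
    (s : Finset (Fin Δ)) : ((G.doubling Δ).neighborSet (a, s)).ncard = Δ := by
  have hdisj : Disjoint ((·, s) '' G.neighborSet a)
      ((fun i => (a, s ∆ {i})) '' {i : Fin Δ | (i : ℕ) < Δ - (G.neighborSet a).ncard}) := by
    refine Set.disjoint_left.mpr ?_
    rintro _ ⟨c, -, rfl⟩ ⟨i, -, h⟩
    simpa using congrArg Prod.snd h
  have htwin_inj : Function.Injective fun i : Fin Δ => (a, s ∆ {i}) := fun i j h =>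
    Finset.singleton_injective (symmDiff_right_injective s (congrArg Prod.snd h))
  have hrounds : {i : Fin Δ | (i : ℕ) < Δ - (G.neighborSet a).ncard}.ncard =
      Δ - (G.neighborSet a).ncard := by
    rw [Set.ncard_eq_toFinset_card', Set.toFinset_ofPred, Fin.card_filter_val_lt]
    omega
  rw [neighborSet_doubling, Set.ncard_union_eq hdisj,
    Set.ncard_image_of_injective _ (Prod.mk_left_injective s),
    Set.ncard_image_of_injective _ htwin_inj, hrounds]
  omega

theorem mem_inter_neighborSet_doubling_cases {a b c : V} {s t r : Finset (Fin Δ)} (hst : s ≠ t)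
    (h : (c, r) ∈ (G.doubling Δ).neighborSet (a, s) ∩ (G.doubling Δ).neighborSet (b, t)) :
    (∃ j, s ∆ t = {j}) ∧ ((c, r) = (b, s) ∨ (c, r) = (a, t)) ∨
      c = a ∧ ∃ i k, i ≠ k ∧ s ∆ r = {i} ∧ s ∆ t = {i} ∆ {k} := by
  obtain ⟨hs, ht⟩ := h
  rcases eq_or_symmDiff_eq_singleton_of_doubling_adj hs with rfl | ⟨rfl, i, hi⟩ <;>
    rcases eq_or_symmDiff_eq_singleton_of_doubling_adj ht with rfl | ⟨rfl, k, hk⟩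
  · exact absurd rfl hst
  · exact .inl ⟨⟨k, symmDiff_comm r t ▸ hk⟩, .inl rfl⟩
  · exact .inl ⟨⟨i, hi⟩, .inr rfl⟩
  · have hst' : s ∆ t = {i} ∆ {k} := by
      rw [← hi, ← hk, symmDiff_symmDiff_symmDiff_comm, symmDiff_self, symmDiff_bot]
    refine .inr ⟨rfl, i, k, ?_, hi, hst'⟩
    rintro rfl
    exact hst (symmDiff_eq_bot.mp (hst'.trans (symmDiff_self _)))

theorem ncard_inter_neighborSet_doubling_le {a b : V} {s t : Finset (Fin Δ)} (hst : s ≠ t) :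
    ((G.doubling Δ).neighborSet (a, s) ∩ (G.doubling Δ).neighborSet (b, t)).ncard ≤ 2 := by
  set S := (G.doubling Δ).neighborSet (a, s) ∩ (G.doubling Δ).neighborSet (b, t)
  suffices ∃ p q, S ⊆ {p, q} by
    obtain ⟨p, q, h⟩ := this
    exact (Set.ncard_le_ncard h).trans ((Set.ncard_insert_le _ _).trans (by simp))
  by_cases hone : ∃ j, s ∆ t = {j}
  · refine ⟨(b, s), (a, t), fun ⟨c, r⟩ hx => ?_⟩
    rcases mem_inter_neighborSet_doubling_cases hst hx with ⟨-, h⟩ | ⟨-, i, k, -, -, h⟩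
    · exact h
    · obtain ⟨j, hj⟩ := hone
      exact absurd (h.symm.trans hj) (Finset.singleton_symmDiff_singleton_ne_singleton i k j)
  rcases S.eq_empty_or_nonempty with hS | ⟨⟨c₀, r₀⟩, hx₀⟩
  · exact ⟨(a, s), (a, s), hS ▸ Set.empty_subset _⟩
  rcases mem_inter_neighborSet_doubling_cases hst hx₀ with ⟨h, -⟩ | ⟨-, i₀, k₀, -, -, h₀⟩
  · exact absurd h hone
  refine ⟨(a, s ∆ {i₀}), (a, s ∆ {k₀}), fun ⟨c, r⟩ hx => ?_⟩
  rcases mem_inter_neighborSet_doubling_cases hst hx with ⟨h, -⟩ | ⟨rfl, i, k, hik, hi, h⟩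
  · exact absurd h hone
  have hr : r = s ∆ {i} := by rw [← hi, symmDiff_symmDiff_cancel_left]
  rcases Finset.eq_or_eq_of_singleton_symmDiff_singleton_eq hik (h.symm.trans h₀) with rfl | rfl
  all_goals simp [hr]

/-- A proper colouring `f` is `p`-peaceful when this set has at most `p` elements for every `v`. -/
def repeatedNeighborSet {α : Type*} (f : V → α) (v : V) : Set V :=
  {x ∈ G.neighborSet v | ∃ u ∈ G.neighborSet v, u ≠ x ∧ f u = f x}

theorem Embedding.ncard_repeatedNeighborSet_comp_le {W α : Type*} [Finite W]
    {H : SimpleGraph W} (φ : G ↪g H) (f : W → α) (v : V) :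
    (G.repeatedNeighborSet (f ∘ φ) v).ncard ≤ (H.repeatedNeighborSet f (φ v)).ncard :=
  Set.ncard_le_ncard_of_injOn φ
    (fun _ ⟨hx, u, hu, hux, hf⟩ =>
      ⟨φ.map_adj_iff.mpr hx, φ u, φ.map_adj_iff.mpr hu, φ.injective.ne hux, hf⟩)
    φ.injective.injOn (Set.toFinite _)

end SimpleGraph

open SimpleGraph in
/-- Every graph of maximum degree at most `Δ` embeds as an induced subgraph in
a `Δ`-regular graph `H` built from copies of `G`, where vertices in different
copies have at most 2 common neighbours, and any `p`-peaceful proper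
`c`-colouring of `H` yields one of `G`. -/
theorem stmt13 (V : Type) [Fintype V] (G : SimpleGraph V) (Δ : ℕ)
    (hdeg : ∀ v, (G.neighborSet v).ncard ≤ Δ) :
    ∃ (W : Type) (_ : Fintype W) (H : SimpleGraph W) (ι : G ↪g H) (copy : W → ℕ),
      (∀ w : W, (H.neighborSet w).ncard = Δ) ∧
      Set.range ι = copy ⁻¹' {0} ∧
      (∀ i : ℕ, (copy ⁻¹' {i}).Nonempty →
        Nonempty ((H.induce (copy ⁻¹' {i})) ≃g G)) ∧
      (∀ u v : W, copy u ≠ copy v →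
        (H.neighborSet u ∩ H.neighborSet v).ncard ≤ 2) ∧
      (∀ (c : ℕ) (p : ℝ) (f : W → Fin c),
        (∀ u v, H.Adj u v → f u ≠ f v) →
        (∀ w : W, ({x ∈ H.neighborSet w |
            ∃ u ∈ H.neighborSet w, u ≠ x ∧ f u = f x}.ncard : ℝ) ≤ p) →
        ∃ g : V → Fin c, (∀ u v, G.Adj u v → g u ≠ g v) ∧
          ∀ v : V, ({x ∈ G.neighborSet v |
            ∃ u ∈ G.neighborSet v, u ≠ x ∧ g u = g x}.ncard : ℝ) ≤ p) := by
  let ι := G.doublingCopy (Δ := Δ) ∅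
  refine ⟨_, inferInstance, G.doubling Δ, ι, fun x => copyIndex x.2,
    fun ⟨a, s⟩ => ncard_neighborSet_doubling (hdeg a) s, ?_, ?_, ?_, ?_⟩
  · exact (preimage_copyIndex ∅).symm
  · rintro _ ⟨⟨a, s⟩, rfl⟩
    rw [preimage_copyIndex]
    exact ⟨(G.doublingCopy s).isoInduceRange.symm⟩
  · rintro ⟨a, s⟩ ⟨b, t⟩ hst
    exact ncard_inter_neighborSet_doubling_le (ne_of_apply_ne _ hst)
  · intro c p f hf hpeace
    refine ⟨f ∘ ι, fun u v huv => hf _ _ (ι.map_adj_iff.mpr huv), fun v => ?_⟩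
    exact (Nat.cast_le.mpr (ι.ncard_repeatedNeighborSet_comp_le f v)).trans (hpeace (ι v))
end

section
/- Let v be a vertex in a Δ-regular graph with a partial list-colouring process where each uncoloured vertex is activated with probability α = 1/log²Δ and assigned a colour uniformly from its list of size l_i'. Suppose for some colour c, the number of uncoloured neighbours of v having c in their list lies between D_i l_i'/l₁ − 2Δ/log⁴Δ and D_i l_i'/l₁ + 2Δ/log⁴Δ, where l_i' ≥ l_i − iΔ/log⁵Δ, l_i ≥ BΔ/log log Δ, and i ≤ log²Δ·log log Δ. Then the probability q that c is assigned to no neighbour of v in the iteration, namely q = (1 − α/l_i')^{|U|} with |U| the count above, satisfies |q − (1 − 1/l₁)^{n_i}| ≤ 1/log^{11/2}Δ for sufficiently large Δ. -/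
set_option maxHeartbeats 1000000

lemma abs_log_one_sub_le' {x : ℝ} (h0 : 0 ≤ x) (h : x ≤ 1/2) : |Real.log (1-x)| ≤ 2*x := by
  have h1 : (0:ℝ) < 1 - x := by linarith
  have hub : Real.log (1-x) ≤ -x := by
    have := Real.log_le_sub_one_of_pos h1; linarith
  have hlb : -(2*x) ≤ Real.log (1-x) := by
    have h2 : (0:ℝ) < (1-x)⁻¹ := by positivity
    have h3 := Real.log_le_sub_one_of_pos h2
    rw [Real.log_inv] at h3
    have h4 : (1-x)⁻¹ - 1 ≤ 2*x := by
      rw [sub_le_iff_le_add, inv_le_iff_one_le_mul₀ h1]; nlinarith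
    linarith
  rw [abs_le]; constructor <;> linarith

lemma abs_log_one_sub_add_le' {x : ℝ} (h0 : 0 ≤ x) (h : x ≤ 1/2) :
    |Real.log (1-x) + x| ≤ 2*x^2 := by
  have h1 : (0:ℝ) < 1 - x := by linarith
  have hub : Real.log (1-x) ≤ -x := by
    have := Real.log_le_sub_one_of_pos h1; linarith
  have hlb : -(2*x^2) - x ≤ Real.log (1-x) := by
    have h2 : (0:ℝ) < (1-x)⁻¹ := by positivity
    have h3 := Real.log_le_sub_one_of_pos h2
    rw [Real.log_inv] at h3
    have h4 : (1-x)⁻¹ - 1 ≤ 2*x^2 + x := by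
      rw [sub_le_iff_le_add, inv_le_iff_one_le_mul₀ h1]; nlinarith
    linarith
  rw [abs_le]; constructor <;> nlinarith

lemma abs_exp_sub_exp' {a b : ℝ} (hb : b ≤ 0) (hab : |a - b| ≤ 1) :
    |Real.exp a - Real.exp b| ≤ 2 * |a - b| := by
  have h1 : Real.exp a - Real.exp b = Real.exp b * (Real.exp (a-b) - 1) := by
    rw [mul_sub, ← Real.exp_add]; ring_nf
  rw [h1, abs_mul, abs_of_pos (Real.exp_pos b)]
  have h2 := Real.abs_exp_sub_one_le hab
  have h3 : Real.exp b ≤ 1 := Real.exp_le_one_iff.mpr hb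
  calc Real.exp b * |Real.exp (a-b) - 1| ≤ 1 * (2 * |a-b|) :=
        mul_le_mul h3 h2 (abs_nonneg _) one_pos.le
    _ = 2 * |a-b| := by ring

lemma hMN_aux {B L S T M : ℝ} (hM0 : 0 < M) (hM4T : M ≤ 4*T) (hT2 : T^2 = S)
    (hSleL : S ≤ L) (hBL : 200 ≤ B*L) (hL1 : 1 ≤ L) : 2*M^2 ≤ B*L^3 := by
  nlinarith [mul_le_mul hM4T hM4T hM0.le (by nlinarith),
    mul_le_mul_of_nonneg_right hBL (sq_nonneg L)]

lemma closeA_aux {B L S T : ℝ} (hB : 0 < B) (hT : 0 < T) (hT2 : T^2 = S) (hS2 : S^2 = L)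
    (h192 : 192 ≤ B*T) : 32*T/(B*L^6) ≤ 1/6 * (1/(L^5*S)) := by
  have hS : 0 < S := by nlinarith
  have hL : 0 < L := by nlinarith
  have hLT : L = T^4 := by nlinarith
  have hST : S = T^2 := hT2.symm
  rw [show (1:ℝ)/6 * (1/(L^5*S)) = 1/(6*(L^5*S)) by ring]
  rw [div_le_div_iff₀ (by positivity) (by positivity), hLT, hST]
  have h : 192 * T^23 ≤ (B*T) * T^23 :=
    mul_le_mul_of_nonneg_right h192 (by positivity)
  nlinarith [h]

lemma closeB_aux {B L S M Δ : ℝ} (hB : 0 < B) (hL1 : 1 ≤ L) (hM0 : 0 ≤ M) (hM : M ≤ L)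
    (hS0 : 0 < S) (hS : S ≤ L) (hBL : 200 ≤ B*L) (hΔ : L^12 ≤ Δ) :
    4*M/(B*L^4*Δ) ≤ 1/6 * (1/(L^5*S)) := by
  have hL : 0 < L := by linarith
  have hΔ0 : 0 < Δ := lt_of_lt_of_le (by positivity) hΔ
  rw [show (1:ℝ)/6 * (1/(L^5*S)) = 1/(6*(L^5*S)) by ring]
  rw [div_le_div_iff₀ (by positivity) (by positivity)]
  calc 4*M*(6*(L^5*S)) = 24*(M*(L^5*S)) := by ring
    _ ≤ 24*(L*(L^5*L)) := by
        have h1 : M*(L^5*S) ≤ L*(L^5*L) := by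
          apply mul_le_mul hM (mul_le_mul_of_nonneg_left hS (by positivity)) (by positivity)
            (by positivity)
        linarith
    _ = 24*L^7 := by ring
    _ ≤ 200*L^15 := by
        have h2 : L^7 ≤ L^15 := pow_le_pow_right₀ hL1 (by norm_num)
        linarith [pow_nonneg hL.le 15]
    _ ≤ (B*L)*L^15 := mul_le_mul_of_nonneg_right hBL (by positivity)
    _ = B*L^4*L^12 := by ring
    _ ≤ B*L^4*Δ := mul_le_mul_of_nonneg_left hΔ (by positivity)
    _ = 1*(B*L^4*Δ) := by ring

lemma closeC_aux {L S Δ : ℝ} (hL : 200 ≤ L) (hS0 : 0 < S) (hS : S ≤ L) (hΔ : L^12 ≤ Δ) :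
    2/(L^2*Δ) ≤ 1/6 * (1/(L^5*S)) := by
  have hL0 : (0:ℝ) < L := by linarith
  have hL1 : (1:ℝ) ≤ L := by linarith
  have hΔ0 : 0 < Δ := lt_of_lt_of_le (by positivity) hΔ
  rw [show (1:ℝ)/6 * (1/(L^5*S)) = 1/(6*(L^5*S)) by ring]
  rw [div_le_div_iff₀ (by positivity) (by positivity)]
  calc 2*(6*(L^5*S)) = 12*(L^5*S) := by ring
    _ ≤ 12*(L^5*L) := by
        have := mul_le_mul_of_nonneg_left hS (by positivity : (0:ℝ) ≤ L^5); linarith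
    _ = 12*L^6 := by ring
    _ ≤ L^14 := by
        have h12 : (12:ℝ) ≤ L^8 := by
          calc (12:ℝ) ≤ 200 := by norm_num
            _ ≤ L := hL
            _ ≤ L^8 := le_self_pow₀ hL1 (by norm_num)
        calc 12*L^6 ≤ L^8*L^6 := mul_le_mul_of_nonneg_right h12 (pow_nonneg hL0.le 6)
          _ = L^14 := by ring
    _ = L^2*L^12 := by ring
    _ ≤ L^2*Δ := mul_le_mul_of_nonneg_left hΔ (by positivity)
    _ = 1*(L^2*Δ) := by ring

lemma main_est (B : ℝ) (hB : 0 < B) (Δ : ℝ)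
    (hC : (192/B)^4 + 200/B + 200 ≤ Real.log Δ)
    (hΔL : (Real.log Δ)^12 ≤ Δ) :
    ∀ l₁ l l' D n U α i : ℝ,
      α = 1 / (Real.log Δ) ^ 2 →
      l₁ = Δ + (⌈B * Δ / Real.log (Real.log Δ)⌉ : ℝ) →
      n = α * D → 0 ≤ D → D ≤ Δ →
      0 ≤ i → i ≤ (Real.log Δ) ^ 2 * Real.log (Real.log Δ) →
      B * Δ / Real.log (Real.log Δ) ≤ l →
      l - i * Δ / (Real.log Δ) ^ 5 ≤ l' →
      D * l' / l₁ - 2 * Δ / (Real.log Δ) ^ 4 ≤ U →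
      U ≤ D * l' / l₁ + 2 * Δ / (Real.log Δ) ^ 4 →
      |(1 - α / l') ^ U - (1 - 1 / l₁) ^ n| ≤ 1 / (Real.log Δ) ^ ((11 : ℝ) / 2) := by
  intro l₁ l l' D n U α i hα hl₁ hn hD0 hDΔ hi0 hi1 hlB hl'lb' hU1 hU2
  set L := Real.log Δ with hLdef
  set M := Real.log L with hMdef
  -- basic facts about L
  have hL200 : (200:ℝ) ≤ L := by
    have p1 : (0:ℝ) ≤ (192/B)^4 := by positivity
    have p2 : (0:ℝ) ≤ 200/B := by positivity
    linarith
  have hL1 : (1:ℝ) ≤ L := by linarith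
  have hLpos : (0:ℝ) < L := by linarith
  have hLB1 : (192/B)^4 ≤ L := by
    have p2 : (0:ℝ) ≤ 200/B := by positivity
    linarith
  have hBL : (200:ℝ) ≤ B * L := by
    have h : 200/B ≤ L := by
      have p1 : (0:ℝ) ≤ (192/B)^4 := by positivity
      linarith
    rw [div_le_iff₀ hB] at h; linarith
  have hΔ1 : L ≤ Δ := le_trans (le_self_pow₀ hL1 (by norm_num)) hΔL
  have hΔpos : (0:ℝ) < Δ := by linarith
  have hΔge1 : (1:ℝ) ≤ Δ := by linarith
  -- M facts
  have hM1 : (1:ℝ) ≤ M := by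
    rw [hMdef, Real.le_log_iff_exp_le hLpos]
    calc Real.exp 1 ≤ 2.7182818286 := Real.exp_one_lt_d9.le
      _ ≤ L := by linarith
  have hMpos : (0:ℝ) < M := by linarith
  have hMleL : M ≤ L := by
    have := Real.log_le_sub_one_of_pos hLpos; rw [← hMdef] at this; linarith
  set S := Real.sqrt L with hSdef
  set T := Real.sqrt S with hTdef
  have hS2 : S^2 = L := Real.sq_sqrt hLpos.le
  have hSpos : (0:ℝ) < S := Real.sqrt_pos.mpr hLpos
  have hT2 : T^2 = S := Real.sq_sqrt hSpos.le
  have hTpos : (0:ℝ) < T := Real.sqrt_pos.mpr hSpos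
  have hS1 : (1:ℝ) ≤ S := by
    rw [hSdef, show (1:ℝ) = Real.sqrt 1 from Real.sqrt_one.symm]
    exact Real.sqrt_le_sqrt hL1
  have hSleL : S ≤ L := by
    calc S = S*1 := by ring
      _ ≤ S*S := by
          exact mul_le_mul_of_nonneg_left hS1 hSpos.le
      _ = L := by rw [← hS2]; ring
  have hMleT : M ≤ 4 * T := by
    have e1 : M = 4 * Real.log T := by
      rw [hMdef, hTdef, hSdef, Real.log_sqrt (Real.sqrt_nonneg L), Real.log_sqrt hLpos.le]
      ring
    have h2 := Real.log_le_sub_one_of_pos hTpos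
    linarith
  have hTB : 192 ≤ B * T := by
    have h1 : Real.sqrt ((192/B)^4) = (192/B)^2 := by
      rw [show ((192/B)^4 : ℝ) = ((192/B)^2)^2 by ring, Real.sqrt_sq (by positivity)]
    have h2 : (192/B)^2 ≤ S := by
      rw [hSdef, ← h1]; exact Real.sqrt_le_sqrt hLB1
    have h3 : Real.sqrt ((192/B)^2) = 192/B := Real.sqrt_sq (by positivity)
    have h4 : 192/B ≤ T := by
      rw [hTdef, ← h3]; exact Real.sqrt_le_sqrt h2
    rw [div_le_iff₀ hB] at h4; linarith
  -- α facts
  have hL2ge1 : (1:ℝ) ≤ L^2 := by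
    calc (1:ℝ) = 1*1 := by ring
      _ ≤ L*L := mul_le_mul hL1 hL1 zero_le_one hLpos.le
      _ = L^2 := by ring
  have hαpos : (0:ℝ) < α := by rw [hα]; positivity
  have hα1 : α ≤ 1 := by rw [hα, div_le_one (by positivity)]; exact hL2ge1
  -- l₁ facts
  have hceil : (0:ℝ) ≤ (⌈B * Δ / M⌉ : ℝ) := by
    have h0 : (0:ℝ) ≤ B * Δ / M := by positivity
    calc (0:ℝ) ≤ B * Δ / M := h0
      _ ≤ (⌈B * Δ / M⌉ : ℝ) := Int.le_ceil _
  have hl₁Δ : Δ ≤ l₁ := by rw [hl₁]; linarith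
  have hl₁pos : (0:ℝ) < l₁ := by linarith
  -- l' lower bound
  have hMN : 2 * M^2 ≤ B * L^3 := hMN_aux hMpos hMleT hT2 hSleL hBL hL1
  have hiΔ : i * Δ / L^5 ≤ M * Δ / L^3 := by
    rw [div_le_div_iff₀ (by positivity) (by positivity)]
    calc i * Δ * L^3 ≤ (L^2*M) * Δ * L^3 :=
          mul_le_mul_of_nonneg_right (mul_le_mul_of_nonneg_right hi1 hΔpos.le) (by positivity)
      _ = M * Δ * L^5 := by ring
  have hkey : M * Δ / L^3 ≤ B * Δ / (2*M) := by
    rw [div_le_div_iff₀ (by positivity) (by positivity)]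
    calc M * Δ * (2*M) = (2*M^2) * Δ := by ring
      _ ≤ (B*L^3) * Δ := mul_le_mul_of_nonneg_right hMN hΔpos.le
      _ = B * Δ * L^3 := by ring
  have hBM2 : B * Δ / M - B * Δ / (2*M) = B * Δ / (2*M) := by
    field_simp; ring
  have hl'lb : B * Δ / (2*M) ≤ l' := by linarith
  have hl'pos : (0:ℝ) < l' := lt_of_lt_of_le (by positivity) hl'lb
  have hinvl' : 1/l' ≤ 2*M/(B*Δ) := by
    rw [div_le_div_iff₀ hl'pos (by positivity)]
    have h5 := (div_le_iff₀ (by positivity : (0:ℝ) < 2*M)).mp hl'lb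
    linarith
  -- x' = α / l'
  have hx'0 : (0:ℝ) ≤ α / l' := by positivity
  have hx'ub : α / l' ≤ 2*M/(B*L^2*Δ) := by
    have e : α / l' = (1/L^2) * (1/l') := by rw [hα]; ring
    rw [e]
    calc (1/L^2) * (1/l') ≤ (1/L^2) * (2*M/(B*Δ)) :=
          mul_le_mul_of_nonneg_left hinvl' (by positivity)
      _ = 2*M/(B*L^2*Δ) := by field_simp
  have hx'half : α / l' ≤ 1/2 := by
    refine le_trans hx'ub ?_
    rw [div_le_div_iff₀ (by positivity) (by norm_num)]
    calc 2*M*2 = 4*M := by ring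
      _ ≤ 4*L := by linarith
      _ = 4*(L*1) := by ring
      _ ≤ 4*(L*Δ) := by
          have := mul_le_mul_of_nonneg_left hΔge1 hLpos.le
          linarith
      _ ≤ 200*(L*Δ) := by
          have hLΔ : (0:ℝ) ≤ L*Δ := by positivity
          linarith
      _ ≤ (B*L)*(L*Δ) := mul_le_mul_of_nonneg_right hBL (by positivity)
      _ = 1*(B*L^2*Δ) := by ring
  -- x₁ = 1/l₁
  have hx₁0 : (0:ℝ) ≤ 1/l₁ := by positivity
  have hx₁Δ : 1/l₁ ≤ 1/Δ := one_div_le_one_div_of_le hΔpos hl₁Δ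
  have hx₁half : 1/l₁ ≤ 1/2 := by
    refine le_trans hx₁Δ ?_
    rw [div_le_div_iff₀ hΔpos (by norm_num)]
    linarith
  -- rewrite rpow as exp
  have hbase1 : (0:ℝ) < 1 - α/l' := by linarith
  have hbase2 : (0:ℝ) < 1 - 1/l₁ := by linarith
  rw [Real.rpow_def_of_pos hbase1, Real.rpow_def_of_pos hbase2]
  set a := Real.log (1 - α/l') * U with hadef
  set b := Real.log (1 - 1/l₁) * n with hbdef
  have hb0 : b ≤ 0 := by
    rw [hbdef]
    apply mul_nonpos_iff.mpr
    right
    exact ⟨Real.log_nonpos (by linarith) (by linarith), by rw [hn]; positivity⟩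
  -- log bounds
  have hL'abs : |Real.log (1 - α/l')| ≤ 2*(α/l') := abs_log_one_sub_le' hx'0 hx'half
  have hL'add : |Real.log (1 - α/l') + α/l'| ≤ 2*(α/l')^2 := abs_log_one_sub_add_le' hx'0 hx'half
  have hL₁add : |Real.log (1 - 1/l₁) + 1/l₁| ≤ 2*(1/l₁)^2 := abs_log_one_sub_add_le' hx₁0 hx₁half
  -- decomposition of a - b
  have hdecomp : a - b =
      Real.log (1 - α/l') * (U - D*l'/l₁)
      + (D/l₁) * (l' * Real.log (1 - α/l') + α)
      - (α*D) * (Real.log (1 - 1/l₁) + 1/l₁) := by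
    rw [hadef, hbdef, hn]
    field_simp
    ring
  -- error bound 1
  have hE1 : |Real.log (1 - α/l') * (U - D*l'/l₁)| ≤ 32*T/(B*L^6) := by
    rw [abs_mul]
    have hU : |U - D*l'/l₁| ≤ 2*Δ/L^4 := abs_le.mpr ⟨by linarith, by linarith⟩
    calc |Real.log (1 - α/l')| * |U - D*l'/l₁|
        ≤ (2*(2*M/(B*L^2*Δ))) * (2*Δ/L^4) := by
          apply mul_le_mul (le_trans hL'abs (by linarith)) hU (abs_nonneg _) (by positivity)
      _ = 8*M/(B*L^6) := by field_simp; ring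
      _ ≤ 32*T/(B*L^6) := by
          apply (div_le_div_iff_of_pos_right (by positivity)).mpr
          linarith
  -- error bound 2
  have hD1 : D/l₁ ≤ 1 := (div_le_one hl₁pos).mpr (hDΔ.trans hl₁Δ)
  have hE2 : (D/l₁) * |l' * Real.log (1 - α/l') + α| ≤ 4*M/(B*L^4*Δ) := by
    have e : l' * Real.log (1 - α/l') + α = l' * (Real.log (1 - α/l') + α/l') := by
      field_simp
    have hY : |l' * Real.log (1 - α/l') + α| ≤ 4*M/(B*L^4*Δ) := by
      rw [e, abs_mul, abs_of_pos hl'pos]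
      calc l' * |Real.log (1 - α/l') + α/l'| ≤ l' * (2*(α/l')^2) :=
            mul_le_mul_of_nonneg_left hL'add hl'pos.le
        _ = (2*α)*(α/l') := by field_simp
        _ ≤ (2*α)*(2*M/(B*L^2*Δ)) := mul_le_mul_of_nonneg_left hx'ub (by positivity)
        _ = 4*M/(B*L^4*Δ) := by rw [hα]; field_simp; ring
    calc (D/l₁) * |l' * Real.log (1 - α/l') + α| ≤ 1 * |l' * Real.log (1 - α/l') + α| :=
          mul_le_mul_of_nonneg_right hD1 (abs_nonneg _)
      _ = |l' * Real.log (1 - α/l') + α| := by ring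
      _ ≤ 4*M/(B*L^4*Δ) := hY
  -- error bound 3
  have hE3 : (α*D) * |Real.log (1 - 1/l₁) + 1/l₁| ≤ 2/(L^2*Δ) := by
    have hαD : α*D ≤ Δ/L^2 := by
      rw [hα]
      calc 1/L^2*D ≤ 1/L^2*Δ := mul_le_mul_of_nonneg_left hDΔ (by positivity)
        _ = Δ/L^2 := by ring
    have hZ : |Real.log (1 - 1/l₁) + 1/l₁| ≤ 2/Δ^2 := by
      refine le_trans hL₁add ?_
      have h6 : (1/l₁)^2 ≤ (1/Δ)^2 := pow_le_pow_left₀ hx₁0 hx₁Δ 2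
      calc 2*(1/l₁)^2 ≤ 2*(1/Δ)^2 := by linarith
        _ = 2/Δ^2 := by field_simp
    calc (α*D) * |Real.log (1 - 1/l₁) + 1/l₁| ≤ (Δ/L^2) * (2/Δ^2) :=
          mul_le_mul hαD hZ (abs_nonneg _) (by positivity)
      _ = 2/(L^2*Δ) := by field_simp
  -- combine
  have habs : |a - b| ≤ 32*T/(B*L^6) + 4*M/(B*L^4*Δ) + 2/(L^2*Δ) := by
    rw [hdecomp]
    have t1 := abs_add_le (Real.log (1 - α/l') * (U - D*l'/l₁))
      ((D/l₁) * (l' * Real.log (1 - α/l') + α))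
    have t2 := abs_add_le (Real.log (1 - α/l') * (U - D*l'/l₁)
      + (D/l₁) * (l' * Real.log (1 - α/l') + α))
      (-((α*D) * (Real.log (1 - 1/l₁) + 1/l₁)))
    rw [abs_neg] at t2
    have e2 : Real.log (1 - α/l') * (U - D*l'/l₁)
      + (D/l₁) * (l' * Real.log (1 - α/l') + α)
      - (α*D) * (Real.log (1 - 1/l₁) + 1/l₁)
      = Real.log (1 - α/l') * (U - D*l'/l₁)
      + (D/l₁) * (l' * Real.log (1 - α/l') + α)
      + -((α*D) * (Real.log (1 - 1/l₁) + 1/l₁)) := by ring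
    rw [e2]
    have h7 : |(D/l₁) * (l' * Real.log (1 - α/l') + α)| ≤ 4*M/(B*L^4*Δ) := by
      rw [abs_mul, abs_of_nonneg (by positivity : (0:ℝ) ≤ D/l₁)]
      exact hE2
    have h8 : |(α*D) * (Real.log (1 - 1/l₁) + 1/l₁)| ≤ 2/(L^2*Δ) := by
      rw [abs_mul, abs_of_nonneg (by positivity : (0:ℝ) ≤ α*D)]
      exact hE3
    linarith
  have hsum : 32*T/(B*L^6) + 4*M/(B*L^4*Δ) + 2/(L^2*Δ) ≤ 1/2 * (1/(L^5*S)) := by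
    have c1 := closeA_aux hB hTpos hT2 hS2 hTB
    have c2 := closeB_aux hB hL1 hMpos.le hMleL hSpos hSleL hBL hΔL
    have c3 := closeC_aux hL200 hSpos hSleL hΔL
    linarith
  have hden1 : (1:ℝ) ≤ L^5*S := by
    calc (1:ℝ) = 1*1 := by ring
      _ ≤ L^5*S := mul_le_mul (one_le_pow₀ hL1) hS1 zero_le_one (by positivity)
  have hab1 : |a - b| ≤ 1 := by
    have : 1/(L^5*S) ≤ 1 := by
      rw [div_le_one (by positivity)]; exact hden1
    linarith
  have hfinal : |Real.exp a - Real.exp b| ≤ 1/(L^5*S) := by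
    have := abs_exp_sub_exp' hb0 hab1
    linarith
  have h115 : L ^ ((11:ℝ)/2) = L^(5:ℕ) * S := by
    rw [hSdef, Real.sqrt_eq_rpow, ← Real.rpow_natCast L 5, ← Real.rpow_add hLpos]
    norm_num
  rw [h115]
  exact hfinal

/-- The probability that a colour is assigned to no neighbour of `v` in an
iteration is within `1/log^{11/2}Δ` of `(1 − 1/l₁)^{n_i}`. -/
theorem stmt16 :
    ∀ B : ℝ, 0 < B → ∃ Δ₀ : ℝ, ∀ Δ : ℝ, Δ₀ ≤ Δ →
    ∀ l₁ l l' D n U α i : ℝ,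
      α = 1 / (Real.log Δ) ^ 2 →
      l₁ = Δ + (⌈B * Δ / Real.log (Real.log Δ)⌉ : ℝ) →
      n = α * D → 0 ≤ D → D ≤ Δ →
      0 ≤ i → i ≤ (Real.log Δ) ^ 2 * Real.log (Real.log Δ) →
      B * Δ / Real.log (Real.log Δ) ≤ l →
      l - i * Δ / (Real.log Δ) ^ 5 ≤ l' →
      D * l' / l₁ - 2 * Δ / (Real.log Δ) ^ 4 ≤ U →
      U ≤ D * l' / l₁ + 2 * Δ / (Real.log Δ) ^ 4 →
      |(1 - α / l') ^ U - (1 - 1 / l₁) ^ n| ≤ 1 / (Real.log Δ) ^ ((11 : ℝ) / 2) := by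
  intro B hB
  have h1 : ∀ᶠ Δ : ℝ in Filter.atTop, (192/B)^4 + 200/B + 200 ≤ Real.log Δ :=
    Real.tendsto_log_atTop.eventually_ge_atTop _
  have h2 : ∀ᶠ Δ : ℝ in Filter.atTop, (Real.log Δ)^12 ≤ Δ := by
    have ht := Real.tendsto_pow_log_div_mul_add_atTop 1 0 12 one_ne_zero
    simp only [one_mul, add_zero] at ht
    filter_upwards [ht.eventually_lt_const one_pos, Filter.eventually_gt_atTop (0:ℝ)]
      with Δ hlt hpos
    rw [div_lt_one hpos] at hlt
    exact hlt.le
  obtain ⟨Δ₀, hΔ₀⟩ := Filter.eventually_atTop.mp (h1.and h2)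
  exact ⟨Δ₀, fun Δ hΔ => main_est B hB Δ (hΔ₀ Δ hΔ).1 (hΔ₀ Δ hΔ).2⟩
end
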